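/- Let k ≥ 1 and consider a recontamination-free search strategy on G_k of cost at most k + 1. Then no row among rows 1,…,k can have all of its row edges clean at any configuration at which fewer than 2k+5 columns are clean. -/
import Mathlib


namespace NodeSearch

/-- A move in the node searching game: place a guard on a vertex or remove one. -/
inductive Move (V : Type*) where
  | place (v : V)
  | remove (v : V)

variable {V : Type*} [DecidableEq V]

/-- The effect of a move on the current set of guarded vertices. -/
def applyMove (U : Finset V) : Move V → Finset V
  | .place v => insert v U
  | .remove v => U.erase v

/-- The set of guarded vertices after the first `i` moves (initially there are no guards). -/
def guardsAt (ms : List (Move V)) (i : ℕ) : Finset V :=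
  (ms.take i).foldl applyMove ∅

/-- Contamination spreads from the edges in `Z` along shared endpoints that are not guarded
(i.e. not in `U`). -/
inductive Spread (G : SimpleGraph V) (U : Finset V) (Z : Set (Sym2 V)) : Sym2 V → Prop where
  | base (e : Sym2 V) (he : e ∈ Z) : Spread G U Z e
  | step (e e' : Sym2 V) (w : V) (hw : w ∉ U) (hwe : w ∈ e) (hwe' : w ∈ e')
      (he' : e' ∈ G.edgeSet) (h : Spread G U Z e) : Spread G U Z e'

/-- The contaminated edges after a move resulting in guard set `U`, given that the
contaminated edges were `Z` before: edges with both endpoints guarded become clean,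
and contamination spreads through unguarded shared endpoints. -/
def nextContam (G : SimpleGraph V) (U : Finset V) (Z : Set (Sym2 V)) : Set (Sym2 V) :=
  {e | Spread G U (Z \ {e | ∀ v ∈ e, v ∈ U}) e}

/-- The set of contaminated edges after the first `i` moves; initially all edges
are contaminated. -/
def contamAt (G : SimpleGraph V) (ms : List (Move V)) : ℕ → Set (Sym2 V)
  | 0 => G.edgeSet
  | i + 1 => nextContam G (guardsAt ms (i + 1)) (contamAt G ms i)

/-- A search strategy: a sequence of moves after which every edge is clean. -/
def IsStrategy (G : SimpleGraph V) (ms : List (Move V)) : Prop :=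
  contamAt G ms ms.length = ∅

/-- The cost of a sequence of moves: the maximum number of guards present at any time. -/
def cost (ms : List (Move V)) : ℕ :=
  (Finset.range (ms.length + 1)).sup fun i => (guardsAt ms i).card

/-- The node searching number of `G`: the minimum cost of a search strategy. -/
noncomputable def ns (G : SimpleGraph V) : ℕ :=
  sInf {c | ∃ ms : List (Move V), IsStrategy G ms ∧ cost ms = c}

/-- A sequence of moves causes no recontamination iff the set of contaminated edges
only ever shrinks. -/
def RecontFree (G : SimpleGraph V) (ms : List (Move V)) : Prop :=
  ∀ i < ms.length, contamAt G ms (i + 1) ⊆ contamAt G ms i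

end NodeSearch

/-- The vertices of the graph `G_k`: pairs `(x, y)` with `x ∈ {1, …, k+2}` and
`y ∈ {1, …, 3k+6}`. -/
abbrev GkVert (k : ℕ) : Type :=
  {p : ℕ × ℕ // p ∈ Finset.Icc 1 (k + 2) ×ˢ Finset.Icc 1 (3 * k + 6)}

/-- The graph `G_k` on `{1, …, k+2} × {1, …, 3k+6}`, with column edges
`{(x,y), (x+1,y)}` for `x ∈ {1, …, k+1}` and row edges `{(x,y), (x,y+1)}`
for `x ∈ {1, …, k}`. -/
def Gk (k : ℕ) : SimpleGraph (GkVert k) :=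
  SimpleGraph.fromRel fun p q =>
    (q.val.1 = p.val.1 + 1 ∧ q.val.2 = p.val.2) ∨
    (p.val.1 = q.val.1 ∧ p.val.1 ≤ k ∧ q.val.2 = p.val.2 + 1)

/-- Column `c` of `G_k` is clean after the first `i` moves if all of its column edges
are clean. -/
def CleanColumn (k : ℕ) (ms : List (NodeSearch.Move (GkVert k))) (i : ℕ) (c : ℕ) : Prop :=
  ∀ e ∈ (Gk k).edgeSet, (∀ v ∈ e, v.val.2 = c) → e ∉ NodeSearch.contamAt (Gk k) ms i


open NodeSearch

theorem contam_closed {V : Type*} [DecidableEq V] (G : SimpleGraph V)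
    (ms : List (Move V)) (i : ℕ) (hi : 1 ≤ i) {e e' : Sym2 V}
    (he : e ∈ contamAt G ms i) (he' : e' ∈ G.edgeSet) (w : V)
    (hw : w ∉ guardsAt ms i) (hwe : w ∈ e) (hwe' : w ∈ e') :
    e' ∈ contamAt G ms i := by
  obtain ⟨j, rfl⟩ : ∃ j, i = j + 1 := ⟨i - 1, by omega⟩
  exact Spread.step e e' w hw hwe hwe' he' he

/-- clamped vertex constructor -/
def cvtx (k x y : ℕ) : GkVert k :=
  ⟨(max 1 (min x (k + 2)), max 1 (min y (3 * k + 6))), by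
    simp only [Finset.mem_product, Finset.mem_Icc]
    omega⟩

theorem cvtx_val {k x y : ℕ} (hx1 : 1 ≤ x) (hx2 : x ≤ k + 2)
    (hy1 : 1 ≤ y) (hy2 : y ≤ 3 * k + 6) : (cvtx k x y).val = (x, y) := by
  simp only [cvtx]
  congr 1 <;> omega

theorem col_edge_mem {k x c : ℕ} (hx1 : 1 ≤ x) (hx2 : x ≤ k + 1)
    (hc1 : 1 ≤ c) (hc2 : c ≤ 3 * k + 6) :
    s(cvtx k x c, cvtx k (x + 1) c) ∈ (Gk k).edgeSet := by
  rw [SimpleGraph.mem_edgeSet, Gk, SimpleGraph.fromRel_adj]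
  have h1 := cvtx_val (k := k) (x := x) (y := c) (by omega) (by omega) hc1 hc2
  have h2 := cvtx_val (k := k) (x := x + 1) (y := c) (by omega) (by omega) hc1 hc2
  constructor
  · intro h; rw [Subtype.ext_iff, h1, h2] at h; simp at h
  · left; left; rw [h1, h2]; simp

theorem row_edge_mem {k r c : ℕ} (hr1 : 1 ≤ r) (hr2 : r ≤ k)
    (hc1 : 1 ≤ c) (hc2 : c + 1 ≤ 3 * k + 6) :
    s(cvtx k r c, cvtx k r (c + 1)) ∈ (Gk k).edgeSet := by
  rw [SimpleGraph.mem_edgeSet, Gk, SimpleGraph.fromRel_adj]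
  have h1 := cvtx_val (k := k) (x := r) (y := c) hr1 (by omega) hc1 (by omega)
  have h2 := cvtx_val (k := k) (x := r) (y := c + 1) hr1 (by omega) (by omega) hc2
  constructor
  · intro h; rw [Subtype.ext_iff, h1, h2] at h; simp at h
  · left; right; rw [h1, h2]; exact ⟨rfl, hr2, rfl⟩

/-- If row r is fully clean and column c contains no guard, then column c is clean. -/
theorem column_clean_of_no_guard {k r c i : ℕ} (hk : 1 ≤ k)
    (hr1 : 1 ≤ r) (hr2 : r ≤ k) (hc1 : 1 ≤ c) (hc2 : c ≤ 3 * k + 6)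
    (ms : List (Move (GkVert k))) (hi1 : 1 ≤ i)
    (hrow : ∀ e ∈ (Gk k).edgeSet, (∀ v ∈ e, v.val.1 = r) →
        e ∉ NodeSearch.contamAt (Gk k) ms i)
    (hng : ∀ u ∈ guardsAt ms i, u.val.2 ≠ c) :
    CleanColumn k ms i c := by
  intro e he hecol hcontam
  -- a vertex of e, lying in column c
  set v : GkVert k := e.out.1 with hv
  have hvmem : v ∈ e := Sym2.out_fst_mem e
  have hvc : v.val.2 = c := hecol v hvmem
  have hvx1 : 1 ≤ v.val.1 ∧ v.val.1 ≤ k + 2 := by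
    have := v.property
    simp only [Finset.mem_product, Finset.mem_Icc] at this
    exact ⟨this.1.1, this.1.2⟩
  -- no guard anywhere in column c means column vertices are unguarded
  have hunguard : ∀ x, cvtx k x c ∉ guardsAt ms i := by
    intro x hx
    exact hng _ hx (by simp [cvtx]; omega)
  -- v equals cvtx k x0 c
  have hveq : v = cvtx k v.val.1 c := by
    apply Subtype.ext
    rw [cvtx_val hvx1.1 hvx1.2 hc1 hc2]
    exact Prod.ext rfl hvc
  -- column edges spread
  have f_mem : ∀ x, 1 ≤ x → x ≤ k + 1 →
      s(cvtx k x c, cvtx k (x + 1) c) ∈ (Gk k).edgeSet :=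
    fun x h1 h2 => col_edge_mem h1 h2 hc1 hc2
  set x1 : ℕ := min v.val.1 (k + 1) with hx1def
  have hx1a : 1 ≤ x1 := by omega
  have hx1b : x1 ≤ k + 1 := by omega
  have hbase : s(cvtx k x1 c, cvtx k (x1 + 1) c) ∈ contamAt (Gk k) ms i := by
    refine contam_closed (Gk k) ms i hi1 hcontam (f_mem x1 hx1a hx1b) v
      (hveq ▸ hunguard v.val.1) hvmem ?_
    rw [Sym2.mem_iff]
    rcases le_or_gt v.val.1 (k + 1) with h | h
    · left; rw [hveq]; congr 1; omega
    · right; rw [hveq]; congr 1; omega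
  -- spread up and down the column
  have stepup : ∀ x, 1 ≤ x → x + 1 ≤ k + 1 →
      s(cvtx k x c, cvtx k (x + 1) c) ∈ contamAt (Gk k) ms i →
      s(cvtx k (x + 1) c, cvtx k (x + 2) c) ∈ contamAt (Gk k) ms i := by
    intro x h1 h2 h
    exact contam_closed (Gk k) ms i hi1 h (f_mem (x + 1) (by omega) h2)
      (cvtx k (x + 1) c) (hunguard _) (by rw [Sym2.mem_iff]; right; rfl)
      (by rw [Sym2.mem_iff]; left; rfl)
  have stepdown : ∀ x, 2 ≤ x → x ≤ k + 1 →
      s(cvtx k x c, cvtx k (x + 1) c) ∈ contamAt (Gk k) ms i →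
      s(cvtx k (x - 1) c, cvtx k x c) ∈ contamAt (Gk k) ms i := by
    intro x h1 h2 h
    have he' : s(cvtx k (x - 1) c, cvtx k (x - 1 + 1) c) ∈ (Gk k).edgeSet :=
      f_mem (x - 1) (by omega) (by omega)
    have hxx : x - 1 + 1 = x := by omega
    rw [hxx] at he'
    exact contam_closed (Gk k) ms i hi1 h he' (cvtx k x c) (hunguard _)
      (by rw [Sym2.mem_iff]; left; rfl) (by rw [Sym2.mem_iff]; right; rfl)
  have up : ∀ d, x1 + d ≤ k + 1 →
      s(cvtx k (x1 + d) c, cvtx k (x1 + d + 1) c) ∈ contamAt (Gk k) ms i := by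
    intro d
    induction d with
    | zero => intro _; exact hbase
    | succ n ih =>
      intro hd
      have := stepup (x1 + n) (by omega) (by omega) (ih (by omega))
      have hxx : x1 + n + 2 = x1 + (n + 1) + 1 := by omega
      rw [hxx] at this
      exact this
  have down : ∀ d, d ≤ x1 - 1 →
      s(cvtx k (x1 - d) c, cvtx k (x1 - d + 1) c) ∈ contamAt (Gk k) ms i := by
    intro d
    induction d with
    | zero => intro _; exact hbase
    | succ n ih =>
      intro hd
      have := stepdown (x1 - n) (by omega) (by omega) (ih (by omega))
      have h1 : x1 - n - 1 = x1 - (n + 1) := by omega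
      have h2 : x1 - n = x1 - (n + 1) + 1 := by omega
      rw [h1, h2] at this
      exact this
  have hfr : s(cvtx k r c, cvtx k (r + 1) c) ∈ contamAt (Gk k) ms i := by
    rcases le_or_gt x1 r with h | h
    · have := up (r - x1) (by omega)
      have hxx : x1 + (r - x1) = r := by omega
      rw [hxx] at this; exact this
    · have := down (x1 - r) (by omega)
      have hxx : x1 - (x1 - r) = r := by omega
      rw [hxx] at this; exact this
  -- now spread to a row edge of row r
  set c' : ℕ := min c (3 * k + 5) with hc'def
  have hrowedge : s(cvtx k r c', cvtx k r (c' + 1)) ∈ (Gk k).edgeSet :=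
    row_edge_mem hr1 hr2 (by omega) (by omega)
  have hshared : cvtx k r c ∈ s(cvtx k r c', cvtx k r (c' + 1)) := by
    rw [Sym2.mem_iff]
    rcases le_or_gt c (3 * k + 5) with h | h
    · left; congr 1; omega
    · right; congr 1; omega
  have hge : s(cvtx k r c', cvtx k r (c' + 1)) ∈ contamAt (Gk k) ms i :=
    contam_closed (Gk k) ms i hi1 hfr hrowedge (cvtx k r c) (hunguard _)
      (by rw [Sym2.mem_iff]; left; rfl) hshared
  refine hrow _ hrowedge ?_ hge
  intro w hw
  rw [Sym2.mem_iff] at hw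
  rcases hw with rfl | rfl
  · exact congrArg Prod.fst (cvtx_val hr1 (by omega) (by omega) (by omega))
  · exact congrArg Prod.fst (cvtx_val hr1 (by omega) (by omega) (by omega))

theorem stmt8 (k : ℕ) (hk : 1 ≤ k) (ms : List (NodeSearch.Move (GkVert k)))
    (hstrat : NodeSearch.IsStrategy (Gk k) ms)
    (hrf : NodeSearch.RecontFree (Gk k) ms)
    (hcost : NodeSearch.cost ms ≤ k + 1)
    (i : ℕ) (hi : i ≤ ms.length)
    (hcols : {c : ℕ | 1 ≤ c ∧ c ≤ 3 * k + 6 ∧ CleanColumn k ms i c}.ncard < 2 * k + 5) :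
    ∀ r, 1 ≤ r → r ≤ k →
      ¬∀ e ∈ (Gk k).edgeSet, (∀ v ∈ e, v.val.1 = r) →
        e ∉ NodeSearch.contamAt (Gk k) ms i := by
  intro r hr1 hr2 hrow
  have hrowfst : ∀ c, 1 ≤ c → c + 1 ≤ 3 * k + 6 →
      ∀ w ∈ s(cvtx k r c, cvtx k r (c + 1)), w.val.1 = r := by
    intro c h1 h2 w hw
    rw [Sym2.mem_iff] at hw
    rcases hw with rfl | rfl
    · exact congrArg Prod.fst (cvtx_val hr1 (by omega) (by omega) (by omega))
    · exact congrArg Prod.fst (cvtx_val hr1 (by omega) (by omega) (by omega))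
  rcases Nat.eq_zero_or_pos i with rfl | hi1
  · have he := row_edge_mem (k := k) (r := r) (c := 1) hr1 hr2 (by omega) (by omega)
    exact hrow _ he (hrowfst 1 le_rfl (by omega)) he
  · set S : Set ℕ := {c : ℕ | 1 ≤ c ∧ c ≤ 3 * k + 6 ∧ CleanColumn k ms i c} with hS
    set U : Finset (GkVert k) := guardsAt ms i with hUdef
    have hU : U.card ≤ k + 1 := by
      refine le_trans ?_ hcost
      exact Finset.le_sup (f := fun j => (guardsAt ms j).card)
        (Finset.mem_range.mpr (by omega))
    set T : Finset ℕ :=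
      (Finset.Icc 1 (3 * k + 6)).filter (fun c => ∀ u ∈ U, u.val.2 ≠ c) with hT
    have hsub : (T : Set ℕ) ⊆ S := by
      intro c hc
      rw [Finset.mem_coe, hT, Finset.mem_filter, Finset.mem_Icc] at hc
      refine ⟨hc.1.1, hc.1.2, ?_⟩
      exact column_clean_of_no_guard hk hr1 hr2 hc.1.1 hc.1.2 ms hi1 hrow hc.2
    have himg : (Finset.Icc 1 (3 * k + 6)) \ (U.image fun u => u.val.2) ⊆ T := by
      intro c hc
      rw [Finset.mem_sdiff] at hc
      rw [hT, Finset.mem_filter]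
      refine ⟨hc.1, fun u hu hne => hc.2 ?_⟩
      exact Finset.mem_image.mpr ⟨u, hu, hne⟩
    have hTcard : 2 * k + 5 ≤ T.card := by
      have h1 := Finset.card_le_card himg
      have h2 := Finset.le_card_sdiff (U.image fun u => u.val.2) (Finset.Icc 1 (3 * k + 6))
      have h3 : (U.image fun u => u.val.2).card ≤ k + 1 :=
        le_trans Finset.card_image_le hU
      have h4 : (Finset.Icc 1 (3 * k + 6)).card = 3 * k + 6 := by
        rw [Nat.card_Icc]; omega
      omega
    have hfin : S.Finite := by
      refine (Set.finite_Icc 1 (3 * k + 6)).subset ?_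
      intro c hc
      exact Set.mem_Icc.mpr ⟨hc.1, hc.2.1⟩
    have := Set.ncard_le_ncard hsub hfin
    rw [Set.ncard_coe_finset] at this
    omega
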